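/- arXiv:1703.10308 — 3 statements merged into one kernel-verified Lean document; each statement's English description precedes it below -/
import Mathlib

section
/- Let α, x, y be real numbers with 1 < α < 2 and 0 < y ≤ x. Then (1/Γ(2−α)) · ∫_0^{√2·y} ω^{1−α} · [ (x−ω/√2)² + (y−ω/√2)² + 4·(x−ω/√2)·(y−ω/√2) ] dω = 2^{1−α/2} · y^{2−α} · ( (α−4)·(α−3)·x² − 2·(α−4)·α·x·y + (α−1)·α·y² ) / Γ(5−α). -/
open Real intervalIntegral MeasureTheory Set
open scoped Interval

/-!
With `β = 2 - α`, the second directional derivative `(x - ω/√2)² + (y - ω/√2)² + 4(x - ω/√2)(y - ω/√2)`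
is a quadratic polynomial in `ω`, so the integral splits into the power integrals
`∫₀ᵀ ω^(β-1+k) dω = T^(β+k)/(β+k)` with `T = √2·y`. The denominators `β(β+1)(β+2)` combine with
`Γ(β)` into `Γ(β+3) = Γ(5-α)`, and `T^β = 2^(1-α/2)·y^(2-α)`.
-/

theorem integral_rpow_mul_sum_pow {β T : ℝ} (hβ : 0 < β) (hT : 0 ≤ T) {n : ℕ} (c : Fin n → ℝ) :
    ∫ ω in (0 : ℝ)..T, ω ^ (β - 1) * ∑ k, c k * ω ^ (k : ℕ) =
      T ^ β * ∑ k, c k * T ^ (k : ℕ) / (β + k) := by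
  have hpos : ∀ k : ℕ, 0 < β + k := fun k => by positivity
  have hpow : ∀ᵐ ω ∂volume, ω ∈ Ι (0 : ℝ) T →
      ω ^ (β - 1) * ∑ k, c k * ω ^ (k : ℕ) = ∑ k, c k * ω ^ (β - 1 + k) := by
    refine .of_forall fun ω hω => ?_
    have hω : ω ≠ 0 := (uIoc_of_le hT ▸ hω).1.ne'
    simp only [Finset.mul_sum, rpow_add_natCast hω]
    exact Finset.sum_congr rfl fun k _ => by ring
  have hint : ∀ k : Fin n, IntervalIntegrable (fun ω : ℝ => ω ^ (β - 1 + (k : ℕ))) volume 0 T :=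
    fun k => intervalIntegrable_rpow' (by linarith [hpos k])
  rw [integral_congr_ae hpow, integral_finsetSum fun k _ => (hint k).const_mul (c k),
    Finset.mul_sum]
  refine Finset.sum_congr rfl fun k _ => ?_
  rw [intervalIntegral.integral_const_mul, integral_rpow (Or.inl (by linarith [hpos k])),
    show β - 1 + (k : ℕ) + 1 = β + (k : ℕ) by ring,
    zero_rpow (hpos k).ne', rpow_add_natCast' hT (hpos k).ne']
  ring

theorem sqrt_two_mul_rpow {y : ℝ} (hy : 0 ≤ y) (β : ℝ) :
    (√2 * y) ^ β = 2 ^ (β / 2) * y ^ β := by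
  rw [mul_rpow (sqrt_nonneg 2) hy, sqrt_eq_rpow, ← rpow_mul zero_le_two, one_div_mul_eq_div]

theorem Gamma_add_three {s : ℝ} (h₀ : s ≠ 0) (h₁ : s + 1 ≠ 0) (h₂ : s + 2 ≠ 0) :
    Gamma (s + 3) = (s + 2) * (s + 1) * s * Gamma s := by
  rw [show s + 3 = s + 2 + 1 by ring, Gamma_add_one h₂, show s + 2 = s + 1 + 1 by ring,
    Gamma_add_one h₁, Gamma_add_one h₀]
  ring

theorem sq_add_sq_add_four_mul_sub_div_sqrt_two (x y ω : ℝ) :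
    (x - ω / √2) ^ 2 + (y - ω / √2) ^ 2 + 4 * (x - ω / √2) * (y - ω / √2) =
      ∑ k : Fin 3, ![x ^ 2 + y ^ 2 + 4 * x * y, -(3 * √2 * (x + y)), 3] k * ω ^ (k : ℕ) := by
  have h2 : √2 ^ 2 = 2 := sq_sqrt zero_le_two
  simp only [Fin.sum_univ_three, Fin.val_zero, Fin.val_one, Fin.val_two, Matrix.cons_val_zero,
    Matrix.cons_val_one, Matrix.cons_val_two, Matrix.tail_cons, Matrix.head_cons, pow_zero, pow_one,
    mul_one]
  field_simp
  linear_combination (-3 * ω ^ 2 + 3 * √2 * ω * (x + y)) * h2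

theorem example_5_3_ii_directional_derivative_general (α x y : ℝ) (hα₂ : α < 2)
    (hy : 0 < y) :
    (1 / Real.Gamma (2 - α)) *
        ∫ ω in (0 : ℝ)..(Real.sqrt 2 * y),
          ω ^ (1 - α) *
            ((x - ω / Real.sqrt 2) ^ 2 + (y - ω / Real.sqrt 2) ^ 2 +
              4 * (x - ω / Real.sqrt 2) * (y - ω / Real.sqrt 2)) =
      2 ^ (1 - α / 2) * y ^ (2 - α) *
          ((α - 4) * (α - 3) * x ^ 2 - 2 * (α - 4) * α * x * y + (α - 1) * α * y ^ 2) /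
        Real.Gamma (5 - α) := by
  have hβ : 0 < 2 - α := by linarith
  have h2 : √2 ^ 2 = 2 := sq_sqrt zero_le_two
  simp_rw [sq_add_sq_add_four_mul_sub_div_sqrt_two, show (1 : ℝ) - α = (2 - α) - 1 by ring]
  rw [integral_rpow_mul_sum_pow hβ (by positivity), sqrt_two_mul_rpow hy.le,
    show (5 : ℝ) - α = (2 - α) + 3 by ring, Gamma_add_three hβ.ne' (by linarith) (by linarith),
    show (2 - α) / 2 = 1 - α / 2 by ring]
  have hΓ : Gamma (2 - α) ≠ 0 := (Gamma_pos_of_pos hβ).ne'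
  have h3 : (2 : ℝ) - α + 1 ≠ 0 := by linarith
  have h4 : (2 : ℝ) - α + 2 ≠ 0 := by linarith
  simp only [Fin.sum_univ_three, Fin.val_zero, Fin.val_one, Fin.val_two, Matrix.cons_val_zero,
    Matrix.cons_val_one, Matrix.cons_val_two, Matrix.tail_cons, Matrix.head_cons, pow_zero, pow_one,
    mul_one, Nat.cast_zero, Nat.cast_one, Nat.cast_ofNat, add_zero, mul_pow, h2]
  field_simp
  -- the middle coefficient `-3√2(x+y)` meets `T = √2 y`, leaving a factor `√2 ^ 2`
  linear_combination (-3 * y * (x + y) * (α - 2) * (α - 4)) * h2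

/-- The Caputo fractional directional derivative `D^α_{π/4}` of `u(x,y) = x²y²`
on the unit square at a point `(x,y)` with `x ≥ y`, giving the source term `f*`
of Examples 5.3(ii) and 5.6. -/
theorem example_5_3_ii_directional_derivative (α x y : ℝ) (hα₁ : 1 < α) (hα₂ : α < 2)
    (hy : 0 < y) (hyx : y ≤ x) :
    (1 / Real.Gamma (2 - α)) *
        ∫ ω in (0 : ℝ)..(Real.sqrt 2 * y),
          ω ^ (1 - α) *
            ((x - ω / Real.sqrt 2) ^ 2 + (y - ω / Real.sqrt 2) ^ 2 +
              4 * (x - ω / Real.sqrt 2) * (y - ω / Real.sqrt 2)) =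
      2 ^ (1 - α / 2) * y ^ (2 - α) *
          ((α - 4) * (α - 3) * x ^ 2 - 2 * (α - 4) * α * x * y + (α - 1) * α * y ^ 2) /
        Real.Gamma (5 - α) :=
  example_5_3_ii_directional_derivative_general α x y hα₂ hy
end

section
/- Let α, Y, x be real numbers with 1 < α < 2, Y > 0, and 0 < x ≤ Y/2, and let p : ℝ → ℝ be p(ω) = ω³·(Y/2 − ω)³. Then x^α · (1/Γ(2−α)) · ∫_0^x (x−ω)^{1−α} · p''(ω) dω = (3/4)·x³·Y³/Γ(4−α) − 18·x⁴·Y²/Γ(5−α) + 180·x⁵·Y/Γ(6−α) − 720·x⁶/Γ(7−α), where p'' denotes the second derivative of p. -/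
/-!
With `a = Y / 2`, `p ω = a³ω³ - 3a²ω⁴ + 3aω⁵ - ω⁶`, so by linearity it suffices to know that
`x ^ α * D^α ω^m = m! / Γ(m + 1 - α) * x ^ m` for `m ≥ 2`. Since `(ω^m)'' = m (m - 1) ω^(m-2)`,
this is the Beta integral `∫₀ˣ (x - ω)^(β-1) ω^k dω = Γ(β) k! / Γ(β + k + 1) * x^(β+k)`
with `β = 2 - α`, which we take from Mathlib's complex Beta function.
-/

open Real
open scoped Nat

theorem integral_rpow_mul_sub_rpow {s t x : ℝ} (hs : 0 < s) (ht : 0 < t) (hx : 0 < x) :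
    ∫ ω in (0 : ℝ)..x, ω ^ (s - 1) * (x - ω) ^ (t - 1) =
      Gamma s * Gamma t / Gamma (s + t) * x ^ (s + t - 1) := by
  have hΓ : Complex.Gamma (s + t) ≠ 0 := by
    rw [← Complex.ofReal_add, Complex.Gamma_ofReal]
    exact_mod_cast (Gamma_pos_of_pos (add_pos hs ht)).ne'
  have hB := Complex.Gamma_mul_Gamma_eq_betaIntegral (s := s) (t := t) (by simpa) (by simpa)
  apply Complex.ofReal_injective
  rw [← intervalIntegral.integral_ofReal, intervalIntegral.integral_congr
    (g := fun ω : ℝ => (ω : ℂ) ^ ((s : ℂ) - 1) * ((x : ℂ) - ω) ^ ((t : ℂ) - 1))]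
  · rw [Complex.betaIntegral_scaled s t hx, eq_div_of_mul_eq hΓ ((mul_comm _ _).trans hB.symm)]
    push_cast
    rw [Complex.ofReal_cpow hx.le, ← Complex.Gamma_ofReal, ← Complex.Gamma_ofReal,
      ← Complex.Gamma_ofReal]
    push_cast
    ring
  · intro ω hω
    rw [Set.uIcc_of_le hx.le] at hω
    push_cast
    rw [Complex.ofReal_cpow hω.1, Complex.ofReal_cpow (sub_nonneg.mpr hω.2)]
    push_cast
    rfl

section RiemannLiouville

variable {β x : ℝ}

theorem intervalIntegrable_sub_rpow_mul_pow (hβ : 0 < β) (x : ℝ) (k : ℕ) :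
    IntervalIntegrable (fun ω => (x - ω) ^ (β - 1) * ω ^ k) MeasureTheory.volume 0 x := by
  have h := (intervalIntegral.intervalIntegrable_rpow' (a := 0) (b := x)
    (r := β - 1) (by linarith)).comp_sub_left x
  simp only [sub_zero, sub_self] at h
  exact h.symm.mul_continuousOn (continuous_pow k).continuousOn

theorem integral_sub_rpow_mul_pow (hβ : 0 < β) (hx : 0 < x) (k : ℕ) :
    ∫ ω in (0 : ℝ)..x, (x - ω) ^ (β - 1) * ω ^ k =
      Gamma β * k ! / Gamma (β + k + 1) * x ^ (β + k) := by
  have h := integral_rpow_mul_sub_rpow (s := k + 1) (t := β) (by positivity) hβ hx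
  simp only [add_sub_cancel_right, rpow_natCast, Gamma_nat_eq_factorial] at h
  rw [show (k : ℝ) + 1 + β = β + k + 1 by ring, add_sub_cancel_right] at h
  simp_rw [mul_comm ((x - _) ^ (β - 1)), h, mul_comm (Gamma β)]

theorem integral_sub_rpow_mul_sum_pow {ι : Type*} (hβ : 0 < β) (hx : 0 < x) (s : Finset ι)
    (c : ι → ℝ) (n : ι → ℕ) :
    ∫ ω in (0 : ℝ)..x, (x - ω) ^ (β - 1) * ∑ i ∈ s, c i * ω ^ n i =
      ∑ i ∈ s, c i * (Gamma β * (n i) ! / Gamma (β + n i + 1) * x ^ (β + n i)) := by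
  simp_rw [Finset.mul_sum, mul_left_comm ((x - _) ^ (β - 1))]
  rw [intervalIntegral.integral_finsetSum fun i _ =>
    (intervalIntegrable_sub_rpow_mul_pow hβ x (n i)).const_mul (c i)]
  simp_rw [intervalIntegral.integral_const_mul, integral_sub_rpow_mul_pow hβ hx]

end RiemannLiouville

section Monomials

variable {ι 𝕜 : Type*} [NontriviallyNormedField 𝕜]

theorem deriv_sum_mul_pow_succ (s : Finset ι) (c : ι → 𝕜) (n : ι → ℕ) :
    deriv (fun ω : 𝕜 => ∑ i ∈ s, c i * ω ^ (n i + 1)) =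
      fun ω => ∑ i ∈ s, c i * (n i + 1) * ω ^ n i := by
  funext ω
  refine (HasDerivAt.fun_sum fun i _ =>
    (hasDerivAt_pow (n i + 1) ω).const_mul (c i)).deriv.trans ?_
  simp_rw [Nat.add_sub_cancel, Nat.cast_succ, mul_assoc]

theorem deriv_deriv_sum_mul_pow_add_two (s : Finset ι) (c : ι → 𝕜) (n : ι → ℕ) :
    deriv (deriv fun ω : 𝕜 => ∑ i ∈ s, c i * ω ^ (n i + 2)) =
      fun ω => ∑ i ∈ s, c i * (n i + 2) * (n i + 1) * ω ^ n i := by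
  have h := deriv_sum_mul_pow_succ s c (fun i => n i + 1)
  push_cast at h
  rw [h, deriv_sum_mul_pow_succ]
  simp_rw [add_assoc, one_add_one_eq_two]

end Monomials

/-- Caputo derivative with lower terminal `0`, for orders `1 < α < 2`. -/
noncomputable def caputoDeriv (α : ℝ) (f : ℝ → ℝ) (x : ℝ) : ℝ :=
  1 / Gamma (2 - α) * ∫ ω in (0 : ℝ)..x, (x - ω) ^ (1 - α) * deriv (deriv f) ω

theorem rpow_mul_caputoDeriv_sum_mul_pow {ι : Type*} {α x : ℝ} (hα : α < 2) (hx : 0 < x)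
    (s : Finset ι) (c : ι → ℝ) (n : ι → ℕ) :
    x ^ α * caputoDeriv α (fun ω => ∑ i ∈ s, c i * ω ^ (n i + 2)) x =
      ∑ i ∈ s, c i * (n i + 2)! / Gamma (n i + 3 - α) * x ^ (n i + 2) := by
  have hβ : 0 < 2 - α := by linarith
  rw [caputoDeriv, deriv_deriv_sum_mul_pow_add_two, show 1 - α = 2 - α - 1 by ring,
    integral_sub_rpow_mul_sum_pow hβ hx, Finset.mul_sum, Finset.mul_sum]
  refine Finset.sum_congr rfl fun i _ => ?_
  have hpow : x ^ α * x ^ (2 - α + n i) = x ^ (n i + 2) := by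
    rw [← rpow_add hx, ← rpow_natCast]
    push_cast
    ring_nf
  rw [show 2 - α + n i + 1 = n i + 3 - α by ring, Nat.factorial_succ, Nat.factorial_succ]
  have hΓ := (Gamma_pos_of_pos hβ).ne'
  field_simp
  rw [← hpow]
  push_cast
  ring

theorem example_5_4_g1_general (α Y x : ℝ) (hα₂ : α < 2)
    (hx₀ : 0 < x)
    (p : ℝ → ℝ) (hp : ∀ ω, p ω = ω ^ 3 * (Y / 2 - ω) ^ 3) :
    x ^ α * ((1 / Real.Gamma (2 - α)) *
        ∫ ω in (0 : ℝ)..x, (x - ω) ^ (1 - α) * deriv (deriv p) ω) =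
      (3 / 4) * x ^ 3 * Y ^ 3 / Real.Gamma (4 - α) -
        18 * x ^ 4 * Y ^ 2 / Real.Gamma (5 - α) +
        180 * x ^ 5 * Y / Real.Gamma (6 - α) -
        720 * x ^ 6 / Real.Gamma (7 - α) := by
  have hp_sum : p = fun ω => ∑ i : Fin 4,
      ![(Y / 2) ^ 3, -3 * (Y / 2) ^ 2, 3 * (Y / 2), -1] i * ω ^ ((i : ℕ) + 1 + 2) := by
    funext ω
    norm_num [hp, Fin.sum_univ_succ]
    ring
  change x ^ α * caputoDeriv α p x = _
  rw [hp_sum, rpow_mul_caputoDeriv_sum_mul_pow hα₂ hx₀]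
  norm_num [Fin.sum_univ_succ, Nat.factorial]
  ring

/-- The left Caputo fractional derivative (times `x^α`) of
`p(ω) = ω³ (Y/2 − ω)³`, giving the function `g₁*` of Example 5.4. -/
theorem example_5_4_g1 (α Y x : ℝ) (hα₁ : 1 < α) (hα₂ : α < 2) (hY : 0 < Y)
    (hx₀ : 0 < x) (hx₁ : x ≤ Y / 2)
    (p : ℝ → ℝ) (hp : ∀ ω, p ω = ω ^ 3 * (Y / 2 - ω) ^ 3) :
    x ^ α * ((1 / Real.Gamma (2 - α)) *
        ∫ ω in (0 : ℝ)..x, (x - ω) ^ (1 - α) * deriv (deriv p) ω) =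
      (3 / 4) * x ^ 3 * Y ^ 3 / Real.Gamma (4 - α) -
        18 * x ^ 4 * Y ^ 2 / Real.Gamma (5 - α) +
        180 * x ^ 5 * Y / Real.Gamma (6 - α) -
        720 * x ^ 6 / Real.Gamma (7 - α) :=
  example_5_4_g1_general α Y x hα₂ hx₀ p hp
end

section
/- Let α, Y, x be real numbers with 1 < α < 2, Y > 0, and 0 ≤ x < Y/2, and let p : ℝ → ℝ be p(ω) = ω³·(Y/2 − ω)³. Then (Y/2 − x)^{α−3} · (1/Γ(2−α)) · ∫_x^{Y/2} (ω−x)^{1−α} · p''(ω) dω = ( −(3/4)·(α−2)·(α−1)·α·Y³ + 18·(α−1)·α·x·Y² − 180·α·x²·Y + 720·x³ ) / Γ(7−α), where p'' denotes the second derivative of p. -/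
/-!
Put `s = Y/2 - x` and `u = ω - x`. Then `p''` is a quartic in `u`, and each monomial `u^k`
integrates against the kernel `u^(1-α)` to `s^(2-α+k) / (2-α+k)`. After multiplying by
`s^(α-3)` only integer powers of `s` remain, and `Γ(7-α) = (2-α)(3-α)(4-α)(5-α)(6-α) Γ(2-α)`
puts the five terms over the common denominator of the right-hand side.
-/

open Real Finset MeasureTheory

theorem Real.Gamma_add_nat_eq_mul_prod {x : ℝ} (hx : 0 < x) (n : ℕ) :
    Gamma (x + n) = Gamma x * ∏ i ∈ range n, (x + i) := by
  induction n with
  | zero => simp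
  | succ n ih =>
    rw [Nat.cast_succ, ← add_assoc, Gamma_add_one (by positivity), ih, prod_range_succ]
    ring

lemma integral_sub_rpow_mul_pow_s12 {γ : ℝ} (hγ : -1 < γ) (a b : ℝ) (k : ℕ) :
    ∫ ω in a..b, (ω - a) ^ γ * (ω - a) ^ k = (b - a) ^ (γ + k + 1) / (γ + k + 1) := by
  have hγk : -1 < γ + k := lt_add_of_lt_of_nonneg hγ k.cast_nonneg
  have hcombine : ∀ᵐ ω ∂volume, ω ∈ Set.uIoc a b →
      (ω - a) ^ γ * (ω - a) ^ k = (ω - a) ^ (γ + k) := by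
    filter_upwards [volume.ae_ne a] with ω hω _
    rw [rpow_add_natCast (sub_ne_zero.mpr hω)]
  rw [intervalIntegral.integral_congr_ae hcombine,
    intervalIntegral.integral_comp_sub_right (fun u => u ^ (γ + k)), sub_self,
    integral_rpow (Or.inl hγk), zero_rpow (by linarith), sub_zero]

lemma intervalIntegrable_sub_rpow_mul_pow_s12 {γ : ℝ} (hγ : -1 < γ) (a b : ℝ) (k : ℕ) :
    IntervalIntegrable (fun ω => (ω - a) ^ γ * (ω - a) ^ k) volume a b := by
  have h :=
    (intervalIntegral.intervalIntegrable_rpow' hγ (a := a - a) (b := b - a)).comp_sub_right a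
  simp only [sub_add_cancel] at h
  exact h.mul_continuousOn (by fun_prop)

lemma integral_sub_rpow_mul_sum {μ : ℝ} (hμ : 0 < μ) (a b : ℝ) {n : ℕ} (c : Fin n → ℝ) :
    ∫ ω in a..b, (ω - a) ^ (μ - 1) * ∑ k : Fin n, c k * (ω - a) ^ (k : ℕ) =
      (b - a) ^ μ * ∑ k : Fin n, c k * (b - a) ^ (k : ℕ) / (μ + k) := by
  have hγ : -1 < μ - 1 := by linarith
  have hterm (k : Fin n) : ∫ ω in a..b, c k * ((ω - a) ^ (μ - 1) * (ω - a) ^ (k : ℕ)) =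
      (b - a) ^ μ * (c k * (b - a) ^ (k : ℕ) / (μ + k)) := by
    rw [intervalIntegral.integral_const_mul, integral_sub_rpow_mul_pow_s12 hγ,
      show μ - 1 + k + 1 = μ + k by ring]
    have hμk : 0 < μ + k := by positivity
    rcases eq_or_ne (b - a) 0 with hab | hab
    · simp [hab, zero_rpow hμk.ne', zero_rpow hμ.ne']
    · rw [rpow_add_natCast hab]
      ring
  simp_rw [mul_sum, mul_left_comm _ (c _)]
  rw [intervalIntegral.integral_finsetSum fun (k : Fin n) _ =>
    (intervalIntegrable_sub_rpow_mul_pow_s12 hγ a b k).const_mul (c k)]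
  exact sum_congr rfl fun k _ => hterm k

lemma deriv_deriv_pow_three_mul_sub_pow_three (c : ℝ) :
    deriv (deriv fun ω : ℝ => ω ^ 3 * (c - ω) ^ 3) =
    fun ω => 6 * ω * (c - ω) ^ 3 - 18 * ω ^ 2 * (c - ω) ^ 2 + 6 * ω ^ 3 * (c - ω) := by
  have hsub (ω : ℝ) : HasDerivAt (fun ω => c - ω) (-1) ω := (hasDerivAt_id ω).const_sub c
  have h1 : deriv (fun ω : ℝ => ω ^ 3 * (c - ω) ^ 3) =
      fun ω => 3 * ω ^ 2 * (c - ω) ^ 3 - 3 * ω ^ 3 * (c - ω) ^ 2 := by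
    funext ω
    refine ((hasDerivAt_pow 3 ω).mul ((hsub ω).pow 3)).deriv.trans ?_
    simp only [Pi.pow_apply]
    ring
  rw [h1]
  funext ω
  refine ((((hasDerivAt_pow 2 ω).const_mul 3).mul ((hsub ω).pow 3)).sub
    (((hasDerivAt_pow 3 ω).const_mul 3).mul ((hsub ω).pow 2))).deriv.trans ?_
  simp only [Pi.pow_apply]
  ring

lemma deriv_deriv_pow_three_mul_sub_pow_three_eq_sum (x s : ℝ) :
    deriv (deriv fun ω : ℝ => ω ^ 3 * (x + s - ω) ^ 3) = fun ω => ∑ k : Fin 5,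
      ![6 * x * s ^ 3 - 18 * x ^ 2 * s ^ 2 + 6 * x ^ 3 * s,
        6 * s ^ 3 - 54 * x * s ^ 2 + 54 * x ^ 2 * s - 6 * x ^ 3,
        -36 * s ^ 2 + 108 * x * s - 36 * x ^ 2, 60 * s - 60 * x, -30] k * (ω - x) ^ (k : ℕ) := by
  rw [deriv_deriv_pow_three_mul_sub_pow_three]
  funext ω
  simp only [Fin.sum_univ_succ, Fin.sum_univ_zero, Matrix.cons_val_zero, Matrix.cons_val_succ,
    Fin.val_zero, Fin.val_succ, Nat.reduceAdd]
  ring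

theorem example_5_4_g2_general (α Y x : ℝ) (hα₂ : α < 2)
    (hx₁ : x < Y / 2)
    (p : ℝ → ℝ) (hp : ∀ ω, p ω = ω ^ 3 * (Y / 2 - ω) ^ 3) :
    (Y / 2 - x) ^ (α - 3) * ((1 / Real.Gamma (2 - α)) *
        ∫ ω in x..(Y / 2), (ω - x) ^ (1 - α) * deriv (deriv p) ω) =
      (-(3 / 4) * (α - 2) * (α - 1) * α * Y ^ 3 + 18 * (α - 1) * α * x * Y ^ 2 -
          180 * α * x ^ 2 * Y + 720 * x ^ 3) /
        Real.Gamma (7 - α) := by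
  obtain ⟨s, hs, rfl⟩ : ∃ s, 0 < s ∧ Y = 2 * (x + s) := ⟨Y / 2 - x, by linarith, by ring⟩
  have hmid : 2 * (x + s) / 2 = x + s := by ring
  simp only [hmid, add_sub_cancel_left] at hp ⊢
  have hΓ : Gamma (7 - α) =
      Gamma (2 - α) * ((2 - α) * (2 - α + 1) * (2 - α + 2) * (2 - α + 3) * (2 - α + 4)) := by
    rw [show 7 - α = 2 - α + (5 : ℕ) by push_cast; ring,
      Gamma_add_nat_eq_mul_prod (by linarith)]
    simp [prod_range_succ]
  have hpow : s ^ (α - 3) * s ^ (2 - α) = s⁻¹ := by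
    rw [← rpow_add hs, ← rpow_neg_one]
    ring_nf
  rw [funext hp, deriv_deriv_pow_three_mul_sub_pow_three_eq_sum,
    show 1 - α = 2 - α - 1 by ring, integral_sub_rpow_mul_sum (by linarith),
    add_sub_cancel_left, mul_left_comm, ← mul_assoc (s ^ (α - 3)), hpow, hΓ]
  have hΓ₂ : Gamma (2 - α) ≠ 0 := (Gamma_pos_of_pos (by linarith)).ne'
  have h₀ : 2 - α ≠ 0 := by linarith
  have h₁ : 2 - α + 1 ≠ 0 := by linarith
  have h₂ : 2 - α + 2 ≠ 0 := by linarith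
  have h₃ : 2 - α + 3 ≠ 0 := by linarith
  have h₄ : 2 - α + 4 ≠ 0 := by linarith
  simp only [Fin.sum_univ_succ, Fin.sum_univ_zero, Matrix.cons_val_zero, Matrix.cons_val_succ,
    Fin.val_zero, Fin.val_succ, Nat.reduceAdd]
  push_cast [add_zero]
  field_simp
  ring

/-- The right Caputo fractional derivative (times `(Y/2 − x)^{α−3}`) of
`p(ω) = ω³ (Y/2 − ω)³`, giving the function `g₂*` of Example 5.4. -/
theorem example_5_4_g2 (α Y x : ℝ) (hα₁ : 1 < α) (hα₂ : α < 2) (hY : 0 < Y)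
    (hx₀ : 0 ≤ x) (hx₁ : x < Y / 2)
    (p : ℝ → ℝ) (hp : ∀ ω, p ω = ω ^ 3 * (Y / 2 - ω) ^ 3) :
    (Y / 2 - x) ^ (α - 3) * ((1 / Real.Gamma (2 - α)) *
        ∫ ω in x..(Y / 2), (ω - x) ^ (1 - α) * deriv (deriv p) ω) =
      (-(3 / 4) * (α - 2) * (α - 1) * α * Y ^ 3 + 18 * (α - 1) * α * x * Y ^ 2 -
          180 * α * x ^ 2 * Y + 720 * x ^ 3) /
        Real.Gamma (7 - α) :=
  example_5_4_g2_general α Y x hα₂ hx₁ p hp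
end
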